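/- Let n ≥ 2k ≥ 2 and let p be the largest prime factor of C(n,k). Then the ℓ¹-norm of the coefficient sequence of the polynomial [n choose k]_q · (1 − q) is at most (2/p)·C(n,k) ≤ (2/k)·C(n,k). -/

import Mathlib

open scoped BigOperators
open Polynomial

/-- The Gaussian (q-)binomial coefficient as a polynomial in `q`. -/
noncomputable def gaussBinom : ℕ → ℕ → Polynomial ℤ
  | _, 0 => 1
  | 0, _ + 1 => 0
  | n + 1, k + 1 => gaussBinom n k + Polynomial.X ^ (k + 1) * gaussBinom n (k + 1)

/-- The ℓ¹-norm of an integer polynomial. -/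
noncomputable def l1normP (P : Polynomial ℤ) : ℤ := ∑ j ∈ P.support, |P.coeff j|

/-!
Up to the shift `q ^ C(k, 2)`, the coefficient of `q ^ m` in `[n choose k]_q` counts the `k`-subsets
of `{0, …, n - 1}` with sum `m`. These counts are symmetric (reflect `a ↦ n - 1 - a`) and unimodal,
so the ℓ¹-norm of their first differences is twice the largest count `u`. Unimodality is Proctor's
`sl₂` argument: for a weighted inner product on each level, moving one element up is adjoint to
moving one element down, and their commutator is multiplication by `k (n - 1) - 2 m`, which is
positive below the middle level; hence moving down is injective there.

It remains to show `p u ≤ C(n, k)`. A `k`-subset with given sum is determined by any `k - 1` of its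
elements, so `k u ≤ C(n, k - 1)`, i.e. `(n - k + 1) u ≤ C(n, k)`: this settles `p ≤ n - k + 1`.
Otherwise `k < p ≤ n < 2 p`. Rotating `{0, …, p - 1}` by `t` adds `t j` to the sum of a subset
mod `p`, where `0 < j < p` is the number of its elements below `p`; so the subset sums are
equidistributed mod `p`, each residue class having `C(n, k) / p` elements.
-/

open Finset

theorem sum_range_succ_coeff_mul_one_sub_X {R : Type*} [Ring R] (P : R[X]) (t : ℕ) :
    ∑ j ∈ range (t + 1), (P * (1 - X)).coeff j = P.coeff t := by
  induction t with
  | zero => simp [mul_sub]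
  | succ t ih => rw [sum_range_succ, ih, mul_sub, mul_one, coeff_sub, coeff_mul_X]; abel

theorem l1normP_eq_sum_range {P : ℤ[X]} {N : ℕ} (hN : P.natDegree < N) :
    l1normP P = ∑ j ∈ range N, |P.coeff j| :=
  sum_subset (supp_subset_range hN) fun j _ hj => by rw [notMem_support_iff.1 hj, abs_zero]

theorem l1normP_mul_X_pow (P : ℤ[X]) (s : ℕ) : l1normP (P * X ^ s) = l1normP P := by
  have hdeg : (P * X ^ s).natDegree < s + (P.natDegree + 1) := by
    have := natDegree_mul_le (p := P) (q := X ^ s)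
    have := natDegree_X_pow_le (R := ℤ) s
    omega
  rw [l1normP_eq_sum_range hdeg, l1normP_eq_sum_range (Nat.lt_succ_self _), sum_range_add,
    sum_eq_zero fun j hj => by simp [coeff_mul_X_pow', (mem_range.1 hj).not_ge], zero_add]
  simp [add_comm s, coeff_mul_X_pow]

theorem l1normP_mul_one_sub_X_of_unimodal {P : ℤ[X]} {c : ℕ} (h0 : 0 ≤ P.coeff 0)
    (hup : ∀ j < c, P.coeff j ≤ P.coeff (j + 1))
    (hdown : ∀ j ≥ c, P.coeff (j + 1) ≤ P.coeff j) :
    l1normP (P * (1 - X)) = 2 * P.coeff c := by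
  set N := c + P.natDegree + 2
  have hdeg : (P * (1 - X)).natDegree < N := by
    calc (P * (1 - X)).natDegree ≤ P.natDegree + (1 - X : ℤ[X]).natDegree := natDegree_mul_le
      _ ≤ P.natDegree + 1 := by gcongr; compute_degree!
      _ < N := by omega
  have hcoeff : ∀ j, (P * (1 - X)).coeff (j + 1) = P.coeff (j + 1) - P.coeff j := by
    intro j; rw [mul_sub, mul_one, coeff_sub, coeff_mul_X]
  have hpos : ∀ j < c + 1, 0 ≤ (P * (1 - X)).coeff j := by
    rintro (_ | j) hj
    · simpa [mul_sub] using h0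
    · rw [hcoeff]; linarith [hup j (by omega)]
  have hneg : ∀ j ∈ Ico (c + 1) N, (P * (1 - X)).coeff j ≤ 0 := by
    intro j hj
    obtain ⟨i, rfl⟩ : ∃ i, j = i + 1 := ⟨j - 1, by grind⟩
    rw [hcoeff]; linarith [hdown i (by grind)]
  have hcN : c + 1 ≤ N := by omega
  have htail : ∑ j ∈ Ico (c + 1) N, (P * (1 - X)).coeff j = -P.coeff c := by
    have htotal := sum_range_succ_coeff_mul_one_sub_X P (N - 1)
    rw [Nat.sub_add_cancel (by omega), coeff_eq_zero_of_natDegree_lt (by omega),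
      ← sum_range_add_sum_Ico _ hcN, sum_range_succ_coeff_mul_one_sub_X] at htotal
    linarith
  rw [l1normP_eq_sum_range hdeg, ← sum_range_add_sum_Ico _ hcN,
    sum_congr rfl fun j hj => abs_of_nonneg (hpos j (mem_range.1 hj)),
    sum_congr rfl fun j hj => abs_of_nonpos (hneg j hj), sum_range_succ_coeff_mul_one_sub_X,
    sum_neg_distrib, htail]
  ring

def subsetsWithSum (n k m : ℕ) : Finset (Finset ℕ) :=
  {A ∈ powersetCard k (range n) | ∑ a ∈ A, a = m}

theorem subset_range_of_mem_subsetsWithSum {n k m : ℕ} {A : Finset ℕ}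
    (hA : A ∈ subsetsWithSum n k m) : A ⊆ range n :=
  (mem_powersetCard.1 (mem_filter.1 hA).1).1

noncomputable def subsetSumGF (n k : ℕ) : ℤ[X] :=
  ∑ A ∈ powersetCard k (range n), X ^ (∑ a ∈ A, a)

theorem coeff_subsetSumGF (n k m : ℕ) : (subsetSumGF n k).coeff m = #(subsetsWithSum n k m) := by
  simp only [subsetSumGF, subsetsWithSum, finsetSum_coeff, coeff_X_pow, @eq_comm _ m]
  push_cast [sum_boole]
  rfl

/-- Sorting by whether `0 ∈ A` and shifting the rest down by one. -/
theorem subsetSumGF_succ_succ (n k : ℕ) :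
    subsetSumGF (n + 1) (k + 1) =
      X ^ k * subsetSumGF n k + X ^ (k + 1) * subsetSumGF n (k + 1) := by
  have hshift : ∀ j, ∑ A ∈ powersetCard j ((range n).map (addRightEmbedding 1)), X ^ (∑ a ∈ A, a)
      = X ^ j * subsetSumGF n j := by
    intro j
    rw [powersetCard_map, sum_map, subsetSumGF, mul_sum]
    refine sum_congr rfl fun A hA => ?_
    simp [sum_add_distrib, (mem_powersetCard.1 hA).2, pow_add, mul_comm]
  have h0 : (0 : ℕ) ∉ (range n).map (addRightEmbedding 1) := by simp
  have hrange : range (n + 1) = insert 0 ((range n).map (addRightEmbedding 1)) := by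
    rw [range_add_one']; rfl
  rw [subsetSumGF, hrange, powersetCard_succ_insert h0, sum_union, sum_image, add_comm, hshift]
  · congr 1
    rw [← hshift]
    refine sum_congr rfl fun A hA => ?_
    have h0A : 0 ∉ A := fun h => h0 ((mem_powersetCard.1 hA).1 h)
    rw [sum_insert h0A, zero_add]
  · intro A hA B hB hAB
    have h0A : 0 ∉ A := fun h => h0 ((mem_powersetCard.1 hA).1 h)
    have h0B : 0 ∉ B := fun h => h0 ((mem_powersetCard.1 hB).1 h)
    rw [← erase_insert h0A, ← erase_insert h0B, hAB]
  · refine disjoint_left.2 fun A hA hA' => ?_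
    obtain ⟨B, -, rfl⟩ := mem_image.1 hA'
    exact h0 ((mem_powersetCard.1 hA).1 (mem_insert_self 0 B))

theorem gaussBinom_mul_X_pow_choose_two (n k : ℕ) :
    gaussBinom n k * X ^ k.choose 2 = subsetSumGF n k := by
  induction n generalizing k with
  | zero =>
    cases k with
    | zero => simp [gaussBinom, subsetSumGF]
    | succ k =>
      rw [subsetSumGF, powersetCard_eq_empty.2 (by simp), sum_empty, gaussBinom, zero_mul]
  | succ n ih =>
    cases k with
    | zero => simp [gaussBinom, subsetSumGF]
    | succ k =>
      rw [subsetSumGF_succ_succ, ← ih, ← ih, gaussBinom, Nat.choose_succ_succ' k 1,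
        Nat.choose_one_right]
      ring

section Reflection

variable {n k : ℕ} {A : Finset ℕ}

theorem sum_le_of_mem_powersetCard_range (hA : A ∈ powersetCard k (range n)) :
    ∑ a ∈ A, a ≤ k * (n - 1) := by
  obtain ⟨hsub, hcard⟩ := mem_powersetCard.1 hA
  simpa [hcard] using sum_le_card_nsmul A id (n - 1) fun a ha => by
    have := mem_range.1 (hsub ha); rw [id]; omega

theorem subsetsWithSum_eq_empty {m : ℕ} (h : k * (n - 1) < m) : subsetsWithSum n k m = ∅ :=
  filter_false_of_mem fun A hA hsum => by
    have := sum_le_of_mem_powersetCard_range hA; omega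

theorem injOn_tsub_range : Set.InjOn (fun a => n - 1 - a) (range n) := by
  intro a ha b hb hab
  simp only [coe_range, Set.mem_Iio] at ha hb hab
  omega

theorem image_reflect_mem (hA : A ∈ powersetCard k (range n)) :
    A.image (fun a => n - 1 - a) ∈ powersetCard k (range n) := by
  obtain ⟨hsub, hcard⟩ := mem_powersetCard.1 hA
  refine mem_powersetCard.2 ⟨fun b hb => ?_, ?_⟩
  · obtain ⟨a, ha, rfl⟩ := mem_image.1 hb
    have := mem_range.1 (hsub ha)
    exact mem_range.2 (by omega)
  · rw [card_image_of_injOn (injOn_tsub_range.mono (coe_subset.2 hsub)), hcard]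

theorem image_reflect_reflect (hA : A ⊆ range n) :
    (A.image fun a => n - 1 - a).image (fun a => n - 1 - a) = A := by
  rw [image_image]
  refine (image_congr fun a ha => ?_).trans image_id
  have := mem_range.1 (hA ha)
  simp only [Function.comp_apply, id_eq]
  omega

theorem sum_image_reflect_add_sum (hA : A ∈ powersetCard k (range n)) :
    ∑ b ∈ A.image (fun a => n - 1 - a), b + ∑ a ∈ A, a = k * (n - 1) := by
  obtain ⟨hsub, hcard⟩ := mem_powersetCard.1 hA
  rw [sum_image (injOn_tsub_range.mono (coe_subset.2 hsub)), ← sum_add_distrib,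
    sum_congr rfl fun a ha => Nat.sub_add_cancel (show a ≤ n - 1 from
      Nat.le_sub_one_of_lt (mem_range.1 (hsub ha))), sum_const, hcard, smul_eq_mul]

theorem card_subsetsWithSum_symm {m : ℕ} (h : m ≤ k * (n - 1)) :
    #(subsetsWithSum n k (k * (n - 1) - m)) = #(subsetsWithSum n k m) := by
  have hmem : ∀ {m' A}, A ∈ subsetsWithSum n k m' →
      A.image (fun a => n - 1 - a) ∈ subsetsWithSum n k (k * (n - 1) - m') := by
    intro m' A hA
    obtain ⟨hpc, rfl⟩ := mem_filter.1 hA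
    exact mem_filter.2 ⟨image_reflect_mem hpc, by have := sum_image_reflect_add_sum hpc; omega⟩
  have hinv : ∀ {m' A}, A ∈ subsetsWithSum n k m' →
      (A.image fun a => n - 1 - a).image (fun a => n - 1 - a) = A :=
    fun hA => image_reflect_reflect (mem_powersetCard.1 (mem_filter.1 hA).1).1
  refine card_nbij' _ _ (fun A hA => ?_) (fun A hA => hmem hA) (fun A hA => hinv hA)
    (fun A hA => hinv hA)
  simpa [Nat.sub_sub_self h] using hmem hA

end Reflection

section Moves

variable {n k m m' a b : ℕ} {A B : Finset ℕ}

def moveUp (a : ℕ) (A : Finset ℕ) : Finset ℕ := insert (a + 1) (A.erase a)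

def moveDown (a : ℕ) (B : Finset ℕ) : Finset ℕ := insert a (B.erase (a + 1))

theorem insert_erase_mem_subsetsWithSum (hA : A ∈ subsetsWithSum n k m) (ha : a ∈ A)
    (hb : b ∉ A) (hbn : b < n) (hm : m + b = m' + a) :
    insert b (A.erase a) ∈ subsetsWithSum n k m' := by
  obtain ⟨hpc, hsum⟩ := mem_filter.1 hA
  obtain ⟨hsub, hcard⟩ := mem_powersetCard.1 hpc
  have hb' : b ∉ A.erase a := fun h => hb (mem_of_mem_erase h)
  refine mem_filter.2 ⟨mem_powersetCard.2 ⟨?_, ?_⟩, ?_⟩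
  · exact insert_subset (mem_range.2 hbn) ((erase_subset a A).trans hsub)
  · rw [card_insert_of_notMem hb', card_erase_of_mem ha, hcard]
    exact Nat.sub_add_cancel (hcard ▸ card_pos.2 ⟨a, ha⟩)
  · have := sum_erase_add A id ha
    simp only [id] at this
    rw [sum_insert hb']
    omega

theorem moveDown_moveUp (ha : a ∈ A) (ha1 : a + 1 ∉ A) : moveDown a (moveUp a A) = A := by
  rw [moveDown, moveUp, erase_insert fun h => ha1 (mem_of_mem_erase h), insert_erase ha]

theorem moveUp_moveDown (ha : a ∉ B) (ha1 : a + 1 ∈ B) : moveUp a (moveDown a B) = B := by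
  rw [moveDown, moveUp, erase_insert fun h => ha (mem_of_mem_erase h), insert_erase ha1]

theorem moveDown_moveUp_comm (hab : a ≠ b) :
    moveDown b (moveUp a A) = moveUp a (moveDown b A) := by
  ext c
  simp only [moveDown, moveUp, mem_insert, mem_erase]
  grind

theorem legal_moveUp_then_moveDown_iff (hab : a ≠ b) :
    ((a ∈ A ∧ a + 1 ∉ A ∧ a + 1 < n) ∧ b ∉ moveUp a A ∧ b + 1 ∈ moveUp a A) ↔
      ((b ∉ A ∧ b + 1 ∈ A) ∧ a ∈ moveDown b A ∧ a + 1 ∉ moveDown b A ∧ a + 1 < n) := by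
  simp only [moveDown, moveUp, mem_insert, mem_erase]
  grind

end Moves

section Weights

variable {n a : ℕ} {A : Finset ℕ}

/-- The weights make `raise` adjoint to `lower` for `levelInner` (`setWeight_moveUp`), and
`upWeight n a - upWeight n (a - 1) = n - 1 - 2 a` is the diagonal of their commutator. -/
def upWeight (n a : ℕ) : ℚ := (a + 1) * (n - 1 - a)

def elemWeight (n a : ℕ) : ℚ := ∏ i ∈ range a, upWeight n i

def setWeight (n : ℕ) (A : Finset ℕ) : ℚ := ∏ a ∈ A, elemWeight n a

theorem upWeight_pos (h : a + 1 < n) : 0 < upWeight n a := by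
  have : (a : ℚ) + 1 < n := by exact_mod_cast h
  unfold upWeight
  nlinarith

theorem setWeight_pos (hA : A ⊆ range n) : 0 < setWeight n A :=
  prod_pos fun a ha => prod_pos fun i hi => upWeight_pos <| by
    have := mem_range.1 (hA ha); have := mem_range.1 hi; omega

theorem setWeight_moveUp (ha : a ∈ A) (ha1 : a + 1 ∉ A) :
    setWeight n (moveUp a A) = upWeight n a * setWeight n A := by
  rw [setWeight, setWeight, moveUp, prod_insert fun h => ha1 (mem_of_mem_erase h),
    ← mul_prod_erase A _ ha, elemWeight, elemWeight, prod_range_succ]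
  ring

end Weights

section Operators

variable {n k m : ℕ} {A : Finset ℕ}

def lower (n : ℕ) : (Finset ℕ → ℚ) →ₗ[ℚ] Finset ℕ → ℚ where
  toFun x B := ∑ a ∈ range n with a ∉ B ∧ a + 1 ∈ B, x (moveDown a B)
  map_add' x y := by ext; simp [sum_add_distrib]
  map_smul' c x := by ext; simp [mul_sum]

theorem lower_apply (n : ℕ) (x : Finset ℕ → ℚ) (B : Finset ℕ) :
    lower n x B = ∑ a ∈ range n with a ∉ B ∧ a + 1 ∈ B, x (moveDown a B) :=
  rfl

def raise (n : ℕ) (y : Finset ℕ → ℚ) (A : Finset ℕ) : ℚ :=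
  ∑ a ∈ range n with a ∈ A ∧ a + 1 ∉ A ∧ a + 1 < n, upWeight n a * y (moveUp a A)

def levelInner (n k m : ℕ) (x y : Finset ℕ → ℚ) : ℚ :=
  ∑ A ∈ subsetsWithSum n k m, setWeight n A * (x A * y A)

theorem levelInner_comm (x y : Finset ℕ → ℚ) : levelInner n k m x y = levelInner n k m y x :=
  sum_congr rfl fun _ _ => by ring

theorem levelInner_self_nonneg (x : Finset ℕ → ℚ) : 0 ≤ levelInner n k m x x :=
  sum_nonneg fun _ hA =>
    mul_nonneg (setWeight_pos (subset_range_of_mem_subsetsWithSum hA)).le (mul_self_nonneg _)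

theorem levelInner_lower (x y : Finset ℕ → ℚ) :
    levelInner n k (m + 1) (lower n x) y = levelInner n k m x (raise n y) := by
  simp only [levelInner, lower_apply, raise, sum_mul, mul_sum]
  rw [sum_comm' (t' := range n)
      (s' := fun a => {B ∈ subsetsWithSum n k (m + 1) | a ∉ B ∧ a + 1 ∈ B})
      (by intros; simp only [mem_filter]; tauto),
    sum_comm' (t' := range n)
      (s' := fun a => {A ∈ subsetsWithSum n k m | a ∈ A ∧ a + 1 ∉ A ∧ a + 1 < n})
      (by intros; simp only [mem_filter]; tauto)]
  refine sum_congr rfl fun a _ => (sum_nbij' (moveUp a) (moveDown a) ?_ ?_ ?_ ?_ ?_).symm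
  · intro A hA
    obtain ⟨hA, ha, ha1, han⟩ := mem_filter.1 hA
    exact mem_filter.2 ⟨insert_erase_mem_subsetsWithSum hA ha ha1 han (by omega), by simp [moveUp]⟩
  · intro B hB
    obtain ⟨hB, ha, ha1⟩ := mem_filter.1 hB
    have han : a + 1 < n := mem_range.1 (subset_range_of_mem_subsetsWithSum hB ha1)
    exact mem_filter.2 ⟨insert_erase_mem_subsetsWithSum hB ha1 ha (by omega) (by omega),
      by simp [moveDown, han]⟩
  · intro A hA
    obtain ⟨-, ha, ha1, -⟩ := mem_filter.1 hA
    exact moveDown_moveUp ha ha1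
  · intro B hB
    obtain ⟨-, ha, ha1⟩ := mem_filter.1 hB
    exact moveUp_moveDown ha ha1
  · intro A hA
    obtain ⟨-, ha, ha1, -⟩ := mem_filter.1 hA
    rw [setWeight_moveUp ha ha1, moveDown_moveUp ha ha1]
    ring


theorem sum_upWeight_mul_ite_sub_ite (hA : A ⊆ range n) :
    ∑ a ∈ range n, upWeight n a * ((if a ∈ A ∧ a + 1 ∉ A ∧ a + 1 < n then 1 else 0) -
      (if a ∉ A ∧ a + 1 ∈ A then 1 else 0)) = ∑ a ∈ A, ((n : ℚ) - 1 - 2 * a) := by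
  set f : ℕ → ℚ := fun c => if c ∈ A then 1 else 0
  set G : ℕ → ℚ := fun c => c * (n - c)
  have hterm : ∀ a ∈ range n, upWeight n a * ((if a ∈ A ∧ a + 1 ∉ A ∧ a + 1 < n then 1 else 0) -
      (if a ∉ A ∧ a + 1 ∈ A then 1 else 0)) = G (a + 1) * f a - G (a + 1) * f (a + 1) := by
    intro a ha
    have hG : upWeight n a = G (a + 1) := by simp only [upWeight, G]; push_cast; ring
    rw [hG, ← mul_sub]
    by_cases h : a + 1 < n
    · by_cases a ∈ A <;> by_cases a + 1 ∈ A <;> simp [f, *]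
    · have ha1 : a + 1 = n := by have := mem_range.1 ha; omega
      simp [G, ← ha1]
  have hshift : ∑ a ∈ range n, G (a + 1) * f (a + 1) = ∑ a ∈ range n, G a * f a := by
    have h1 := sum_range_succ' (fun c => G c * f c) n
    have h2 := sum_range_succ (fun c => G c * f c) n
    have hn : f n = 0 := if_neg fun h => by simpa using hA h
    simp only [G, hn, CharP.cast_eq_zero, zero_mul, add_zero, mul_zero] at h1 h2
    linarith
  rw [sum_congr rfl hterm, sum_sub_distrib, hshift, ← sum_sub_distrib,
    ← inter_eq_right.2 hA, ← sum_ite_mem]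
  refine sum_congr rfl fun a _ => ?_
  simp only [f, G]
  split_ifs <;> push_cast <;> ring

theorem raise_lower_sub_lower_raise (x : Finset ℕ → ℚ) (hA : A ⊆ range n) :
    raise n (lower n x) A - lower n (raise n x) A = (∑ a ∈ A, ((n : ℚ) - 1 - 2 * a)) * x A := by
  have hFE : raise n (lower n x) A = ∑ a ∈ range n, ∑ b ∈ range n,
      if (a ∈ A ∧ a + 1 ∉ A ∧ a + 1 < n) ∧ b ∉ moveUp a A ∧ b + 1 ∈ moveUp a A
      then upWeight n a * x (moveDown b (moveUp a A)) else 0 := by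
    simp only [raise, lower_apply, sum_filter, mul_sum, ite_and]
    refine sum_congr rfl fun a _ => ?_
    split_ifs <;> simp [mul_ite]
  have hEF : lower n (raise n x) A = ∑ a ∈ range n, ∑ b ∈ range n,
      if (b ∉ A ∧ b + 1 ∈ A) ∧ a ∈ moveDown b A ∧ a + 1 ∉ moveDown b A ∧ a + 1 < n
      then upWeight n a * x (moveUp a (moveDown b A)) else 0 := by
    rw [sum_comm]
    simp only [raise, lower_apply, sum_filter, ite_and]
    refine sum_congr rfl fun b _ => ?_
    split_ifs <;> simp
  rw [hFE, hEF, ← sum_sub_distrib, ← sum_upWeight_mul_ite_sub_ite hA, sum_mul]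
  refine sum_congr rfl fun a ha => ?_
  rw [← sum_sub_distrib, sum_eq_single_of_mem a ha fun b _ hba => by
    simp only [legal_moveUp_then_moveDown_iff (Ne.symm hba), moveDown_moveUp_comm (Ne.symm hba),
      sub_self]]
  have hup : a ∉ moveUp a A ∧ a + 1 ∈ moveUp a A := by simp [moveUp]
  have hdown : a ∈ moveDown a A ∧ a + 1 ∉ moveDown a A := by simp [moveDown]
  have hlt : a + 1 ∈ A → a + 1 < n := fun h => mem_range.1 (hA h)
  simp only [hup, hdown, not_false_eq_true, and_true, true_and]
  by_cases h1 : a ∈ A ∧ a + 1 ∉ A ∧ a + 1 < n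
  · simp [h1, moveDown_moveUp h1.1 h1.2.1]
  · by_cases h2 : a ∉ A ∧ a + 1 ∈ A
    · simp [h2, hlt h2.2, moveUp_moveDown h2.1 h2.2]
    · simp [h1, h2]

end Operators

section Unimodality

variable {n k m : ℕ}

theorem eq_zero_of_levelInner_self_eq_zero {x : Finset ℕ → ℚ} (h : levelInner n k m x x = 0)
    {A : Finset ℕ} (hA : A ∈ subsetsWithSum n k m) : x A = 0 := by
  have hpos := setWeight_pos (subset_range_of_mem_subsetsWithSum hA)
  have := (sum_eq_zero_iff_of_nonneg fun B hB => mul_nonneg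
    (setWeight_pos (subset_range_of_mem_subsetsWithSum hB)).le (mul_self_nonneg (x B))).1 h A hA
  simpa [hpos.ne'] using this

theorem levelInner_raise_lower (x : Finset ℕ → ℚ) :
    levelInner n k m x (raise n (lower n x)) = levelInner n k m x (lower n (raise n x)) +
      ((k : ℚ) * (n - 1) - 2 * m) * levelInner n k m x x := by
  simp only [levelInner, mul_sum, ← sum_add_distrib]
  refine sum_congr rfl fun A hA => ?_
  obtain ⟨hpc, hsum⟩ := mem_filter.1 hA
  obtain ⟨hsub, hcard⟩ := mem_powersetCard.1 hpc
  have hcomm := raise_lower_sub_lower_raise x hsub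
  have hdiag : ∑ a ∈ A, ((n : ℚ) - 1 - 2 * a) = k * (n - 1) - 2 * m := by
    rw [sum_sub_distrib, sum_const, hcard, ← mul_sum, ← hsum]; push_cast; ring
  rw [hdiag] at hcomm
  linear_combination (setWeight n A * x A) * hcomm

theorem lower_apply_of_sum_eq_zero {B : Finset ℕ} (hB : ∑ b ∈ B, b = 0) (y : Finset ℕ → ℚ) :
    lower n y B = 0 :=
  (lower_apply n y B).trans <| sum_eq_zero fun a ha => by
    have := single_le_sum (f := id) (fun _ _ => Nat.zero_le _) (mem_filter.1 ha).2.2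
    simp only [id] at this
    omega

theorem mul_levelInner_le_levelInner_lower (x : Finset ℕ → ℚ) :
    ((k : ℚ) * (n - 1) - 2 * m) * levelInner n k m x x ≤
      levelInner n k (m + 1) (lower n x) (lower n x) := by
  have hnonneg : 0 ≤ levelInner n k m x (lower n (raise n x)) := by
    cases m with
    | zero => exact (sum_eq_zero fun B hB => by
        rw [lower_apply_of_sum_eq_zero (mem_filter.1 hB).2, mul_zero, mul_zero]).ge
    | succ m => rw [levelInner_comm, levelInner_lower]; exact levelInner_self_nonneg _
  rw [levelInner_lower, levelInner_raise_lower]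
  linarith

theorem card_subsetsWithSum_le_succ (h : 2 * m < k * (n - 1)) :
    #(subsetsWithSum n k m) ≤ #(subsetsWithSum n k (m + 1)) := by
  let T := LinearMap.funLeft ℚ ℚ (Subtype.val : subsetsWithSum n k (m + 1) → Finset ℕ) ∘ₗ
    lower n ∘ₗ Function.ExtendByZero.linearMap ℚ (Subtype.val : subsetsWithSum n k m → Finset ℕ)
  have hc : 0 < (k : ℚ) * (n - 1) - 2 * m := by
    have hn : 1 ≤ n := Nat.one_le_iff_ne_zero.2 (by rintro rfl; simp at h)
    have : ((2 * m : ℕ) : ℚ) < (k * (n - 1) : ℕ) := by exact_mod_cast h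
    push_cast [hn] at this
    linarith
  have hinj : Function.Injective T := by
    refine (injective_iff_map_eq_zero T).2 fun x hx => ?_
    set x' := Function.ExtendByZero.linearMap ℚ (Subtype.val : subsetsWithSum n k m → Finset ℕ) x
    have hlow : levelInner n k (m + 1) (lower n x') (lower n x') = 0 := sum_eq_zero fun B hB => by
      have := congr_fun hx ⟨B, hB⟩
      simp only [T, LinearMap.coe_comp, Function.comp_apply, LinearMap.funLeft_apply] at this
      simp [x', this]
    have hzero : levelInner n k m x' x' = 0 := by
      nlinarith [mul_levelInner_le_levelInner_lower (n := n) (k := k) (m := m) x',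
        levelInner_self_nonneg (n := n) (k := k) (m := m) x']
    ext ⟨A, hA⟩
    have := eq_zero_of_levelInner_self_eq_zero hzero hA
    rwa [show x' A = x ⟨A, hA⟩ from Subtype.val_injective.extend_apply x 0 ⟨A, hA⟩] at this
  simpa using LinearMap.finrank_le_finrank_of_injective hinj

theorem card_subsetsWithSum_succ_le (h : k * (n - 1) ≤ 2 * m) :
    #(subsetsWithSum n k (m + 1)) ≤ #(subsetsWithSum n k m) := by
  by_cases hm : m + 1 ≤ k * (n - 1)
  · rw [← card_subsetsWithSum_symm hm, ← card_subsetsWithSum_symm (by omega : m ≤ k * (n - 1)),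
      show k * (n - 1) - m = k * (n - 1) - (m + 1) + 1 by omega]
    exact card_subsetsWithSum_le_succ (by omega)
  · simp [subsetsWithSum_eq_empty (show k * (n - 1) < m + 1 by omega)]

end Unimodality

section Anticoncentration

variable {n k m : ℕ}

/-- Double counting of the pairs `B ⊆ A`: removing one element from `A` is recoverable from the
sum, since the removed element is `m - ∑ B`. -/
theorem succ_mul_card_subsetsWithSum_le_choose :
    (k + 1) * #(subsetsWithSum n (k + 1) m) ≤ n.choose k := by
  have hcount := card_mul_le_card_mul (fun A B : Finset ℕ => B ⊆ A)
    (s := subsetsWithSum n (k + 1) m) (t := powersetCard k (range n)) (m := k + 1) (n := 1)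
    (fun A hA => ?_) (fun B hB => ?_)
  · simpa [card_powersetCard, mul_comm] using hcount
  · obtain ⟨hsub, hcard⟩ := mem_powersetCard.1 (mem_filter.1 hA).1
    calc k + 1 = #(powersetCard k A) := by rw [card_powersetCard, hcard, Nat.choose_succ_self_right]
      _ ≤ _ := card_le_card fun B hB => by
        obtain ⟨hBA, hBcard⟩ := mem_powersetCard.1 hB
        exact (mem_bipartiteAbove _).2 ⟨mem_powersetCard.2 ⟨hBA.trans hsub, hBcard⟩, hBA⟩
  · have hunique : ∀ A ∈ subsetsWithSum n (k + 1) m, B ⊆ A →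
        A = insert (m - ∑ b ∈ B, b) B := by
      intro A hA hBA
      obtain ⟨hpc, hsum⟩ := mem_filter.1 hA
      obtain ⟨a, haB, rfl⟩ := exists_eq_insert_iff.2
        ⟨hBA, by rw [(mem_powersetCard.1 hB).2, (mem_powersetCard.1 hpc).2]⟩
      rw [sum_insert haB] at hsum
      rw [← hsum, Nat.add_sub_cancel]
    refine card_le_one.2 fun A₁ h₁ A₂ h₂ => ?_
    rw [mem_bipartiteBelow] at h₁ h₂
    rw [hunique _ h₁.1 h₁.2, hunique _ h₂.1 h₂.2]

theorem sub_mul_card_subsetsWithSum_le_choose :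
    (n - k) * #(subsetsWithSum n (k + 1) m) ≤ n.choose (k + 1) := by
  refine Nat.le_of_mul_le_mul_left ?_ k.succ_pos
  calc (k + 1) * ((n - k) * #(subsetsWithSum n (k + 1) m))
      = (n - k) * ((k + 1) * #(subsetsWithSum n (k + 1) m)) := by ring
    _ ≤ (n - k) * n.choose k := Nat.mul_le_mul_left _ succ_mul_card_subsetsWithSum_le_choose
    _ = (k + 1) * n.choose (k + 1) := by rw [mul_comm, ← Nat.choose_succ_right_eq, mul_comm]

theorem mul_card_subsetsWithSum_le_choose (h2k : 2 * k ≤ n) :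
    k * #(subsetsWithSum n k m) ≤ n.choose k := by
  cases k with
  | zero => simp
  | succ k =>
    exact succ_mul_card_subsetsWithSum_le_choose.trans
      (Nat.choose_le_succ_of_lt_half_left (by omega))

end Anticoncentration

section Rotation

variable {n p t x : ℕ}

def blockRotate (n p t x : ℕ) : ℕ := if x < p * (n / p) then p * (x / p) + (x + t) % p else x

theorem blockRotate_lt_iff (hp : 0 < p) : blockRotate n p t x < p * (n / p) ↔ x < p * (n / p) := by
  unfold blockRotate
  split_ifs with hx
  · refine iff_of_true ?_ hx
    have hq : x / p < n / p := Nat.div_lt_of_lt_mul hx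
    have := Nat.mod_lt (x + t) hp
    nlinarith
  · exact Iff.rfl

theorem blockRotate_injective (hp : 0 < p) : Function.Injective (blockRotate n p t) := by
  intro x y hxy
  have hlt := (blockRotate_lt_iff (n := n) (t := t) (x := x) hp).symm.trans
    (hxy ▸ blockRotate_lt_iff (n := n) (t := t) (x := y) hp)
  unfold blockRotate at hxy
  by_cases hx : x < p * (n / p)
  · rw [if_pos hx, if_pos (hlt.1 hx)] at hxy
    have hdiv : x / p = y / p := by
      have := congrArg (· / p) hxy
      simpa [Nat.mul_add_div hp, Nat.div_eq_of_lt (Nat.mod_lt _ hp)] using this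
    have hmod : x % p = y % p := by
      rw [hdiv] at hxy
      exact Nat.ModEq.add_right_cancel' t (Nat.add_left_cancel hxy)
    rw [← Nat.div_add_mod x p, ← Nat.div_add_mod y p, hdiv, hmod]
  · rwa [if_neg hx, if_neg (mt hlt.2 hx)] at hxy

theorem blockRotate_lt (hp : 0 < p) (hx : x < n) : blockRotate n p t x < n := by
  by_cases h : x < p * (n / p)
  · exact ((blockRotate_lt_iff hp).2 h).trans_le (Nat.mul_div_le n p)
  · rwa [blockRotate, if_neg h]

theorem natCast_blockRotate (hx : x < p * (n / p)) :
    ((blockRotate n p t x : ℕ) : ZMod p) = x + t := by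
  rw [blockRotate, if_pos hx]
  push_cast
  rw [ZMod.natCast_self, zero_mul, zero_add, ← Nat.cast_add, ZMod.natCast_mod]

end Rotation

section Equidistribution

variable {n k p t : ℕ} {A : Finset ℕ}

theorem image_blockRotate_mem (hp : 0 < p) (hA : A ∈ powersetCard k (range n)) :
    A.image (blockRotate n p t) ∈ powersetCard k (range n) := by
  obtain ⟨hsub, hcard⟩ := mem_powersetCard.1 hA
  refine mem_powersetCard.2 ⟨fun b hb => ?_, ?_⟩
  · obtain ⟨a, ha, rfl⟩ := mem_image.1 hb
    exact mem_range.2 (blockRotate_lt hp (mem_range.1 (hsub ha)))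
  · rw [card_image_of_injective _ (blockRotate_injective hp), hcard]

theorem card_filter_image_blockRotate (hp : 0 < p) :
    #{b ∈ A.image (blockRotate n p t) | b < p * (n / p)} = #{a ∈ A | a < p * (n / p)} := by
  rw [filter_image, card_image_of_injective _ (blockRotate_injective hp)]
  simp only [blockRotate_lt_iff hp]

theorem sum_image_blockRotate (hp : 0 < p) :
    ∑ b ∈ A.image (blockRotate n p t), ((b : ℕ) : ZMod p) =
      ∑ a ∈ A, ((a : ℕ) : ZMod p) + t * #{a ∈ A | a < p * (n / p)} := by
  rw [sum_image fun x _ y _ h => blockRotate_injective hp h]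
  have hterm : ∀ a ∈ A, ((blockRotate n p t a : ℕ) : ZMod p) =
      a + if a < p * (n / p) then (t : ZMod p) else 0 := by
    intro a _
    split_ifs with h
    · exact natCast_blockRotate h
    · rw [blockRotate, if_neg h, add_zero]
  rw [sum_congr rfl hterm, sum_add_distrib, sum_ite, sum_const, sum_const_zero, add_zero,
    nsmul_eq_mul, mul_comm]

theorem natCast_card_filter_lt_ne_zero (hkp : k < p) (hnp : n % p < k)
    (hA : A ∈ powersetCard k (range n)) : (#{a ∈ A | a < p * (n / p)} : ZMod p) ≠ 0 := by
  obtain ⟨hsub, hcard⟩ := mem_powersetCard.1 hA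
  have hhigh : #{a ∈ A | ¬a < p * (n / p)} ≤ n % p := by
    calc #{a ∈ A | ¬a < p * (n / p)} ≤ #(Ico (p * (n / p)) n) := card_le_card fun a ha => by
          simp only [mem_filter, not_lt] at ha
          exact mem_Ico.2 ⟨ha.2, mem_range.1 (hsub ha.1)⟩
      _ = n % p := by rw [Nat.card_Ico]; have := Nat.mod_add_div n p; omega
  have hsplit := card_filter_add_card_filter_not (s := A) (p := (· < p * (n / p)))
  rw [Ne, ZMod.natCast_eq_zero_iff]
  intro hdvd
  have := Nat.le_of_dvd (by omega) hdvd
  omega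

theorem card_filter_sum_le_card_filter_sum (hp : p.Prime) (hkp : k < p) (hnp : n % p < k)
    (r s : ZMod p) :
    #{A ∈ powersetCard k (range n) | ∑ a ∈ A, ((a : ℕ) : ZMod p) = r} ≤
      #{A ∈ powersetCard k (range n) | ∑ a ∈ A, ((a : ℕ) : ZMod p) = s} := by
  have := Fact.mk hp
  set N := p * (n / p)
  let shift : Finset ℕ → ℕ := fun A => ((s - r) * (#{a ∈ A | a < N} : ZMod p)⁻¹).val
  refine card_le_card_of_injOn (fun A => A.image (blockRotate n p (shift A)))
    (fun A hA => ?_) (fun A hA B hB hAB => ?_)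
  · obtain ⟨hA, hsum⟩ := mem_filter.1 hA
    refine mem_filter.2 ⟨image_blockRotate_mem hp.pos hA, ?_⟩
    rw [sum_image_blockRotate hp.pos, hsum, ZMod.natCast_zmod_val, mul_assoc,
      inv_mul_cancel₀ (natCast_card_filter_lt_ne_zero hkp hnp hA)]
    ring
  · have hcount : #{a ∈ A | a < N} = #{a ∈ B | a < N} := by
      rw [← card_filter_image_blockRotate (t := shift A) hp.pos,
        ← card_filter_image_blockRotate (A := B) (t := shift B) hp.pos]
      exact congrArg (fun C => #{c ∈ C | c < N}) hAB
    have hshift : shift A = shift B := by simp only [shift, hcount]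
    simp only [hshift] at hAB
    exact image_injective (blockRotate_injective hp.pos) hAB

theorem prime_mul_card_subsetsWithSum_le_choose_of_lt (hp : p.Prime) (hkp : k < p)
    (hnp : n % p < k) (m : ℕ) : p * #(subsetsWithSum n k m) ≤ n.choose k := by
  have := Fact.mk hp
  let residueClass := fun r : ZMod p =>
    #{A ∈ powersetCard k (range n) | ∑ a ∈ A, ((a : ℕ) : ZMod p) = r}
  calc p * #(subsetsWithSum n k m) ≤ ∑ _r : ZMod p, residueClass m := by
        rw [sum_const, card_univ, ZMod.card, smul_eq_mul]
        refine Nat.mul_le_mul_left p (card_le_card fun A hA => ?_)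
        obtain ⟨hA, hsum⟩ := mem_filter.1 hA
        exact mem_filter.2 ⟨hA, by rw [← hsum]; push_cast; rfl⟩
    _ ≤ ∑ r : ZMod p, residueClass r :=
        sum_le_sum fun r _ => card_filter_sum_le_card_filter_sum hp hkp hnp _ _
    _ = n.choose k := by
        rw [← card_eq_sum_card_fiberwise fun _ _ => mem_univ _, card_powersetCard, card_range]

end Equidistribution

theorem prime_mul_card_subsetsWithSum_le_choose {n k p : ℕ} (hk : 1 ≤ k) (h2k : 2 * k ≤ n)
    (hp : p.Prime) (hdvd : p ∣ n.choose k) (m : ℕ) :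
    p * #(subsetsWithSum n k m) ≤ n.choose k := by
  obtain ⟨j, rfl⟩ := Nat.exists_eq_add_of_le' hk
  by_cases hpj : p ≤ n - j
  · exact (Nat.mul_le_mul_right _ hpj).trans sub_mul_card_subsetsWithSum_le_choose
  · have hpn : p ≤ n := by
      rw [← hp.dvd_factorial, ← Nat.choose_mul_factorial_mul_factorial (show j + 1 ≤ n by omega)]
      exact (hdvd.mul_right _).mul_right _
    refine prime_mul_card_subsetsWithSum_le_choose_of_lt hp (by omega) ?_ m
    rw [Nat.mod_eq_sub_mod hpn, Nat.mod_eq_of_lt (by omega)]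
    omega

theorem l1normP_gaussBinom_mul_one_sub_X (n k : ℕ) :
    l1normP (gaussBinom n k * (1 - X)) = 2 * #(subsetsWithSum n k ((k * (n - 1) + 1) / 2)) := by
  rw [← l1normP_mul_X_pow _ (k.choose 2), mul_right_comm, gaussBinom_mul_X_pow_choose_two,
    l1normP_mul_one_sub_X_of_unimodal (c := (k * (n - 1) + 1) / 2), coeff_subsetSumGF]
  · rw [coeff_subsetSumGF]; positivity
  · intro j hj
    simp only [coeff_subsetSumGF, Nat.cast_le]
    exact card_subsetsWithSum_le_succ (by omega)
  · intro j hj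
    simp only [coeff_subsetSumGF, Nat.cast_le]
    exact card_subsetsWithSum_succ_le (by omega)

theorem l1norm_gaussBinom_le_general (n k p : ℕ) (hk : 1 ≤ k) (h2k : 2 * k ≤ n)
    (hp : p.Prime) (hdvd : p ∣ n.choose k) :
    (p : ℤ) * l1normP (gaussBinom n k * (1 - Polynomial.X)) ≤ 2 * (n.choose k : ℤ) ∧
    (k : ℤ) * l1normP (gaussBinom n k * (1 - Polynomial.X)) ≤ 2 * (n.choose k : ℤ) := by
  set c := (k * (n - 1) + 1) / 2
  have hprime : ((p * #(subsetsWithSum n k c) : ℕ) : ℤ) ≤ n.choose k :=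
    Nat.cast_le.2 (prime_mul_card_subsetsWithSum_le_choose hk h2k hp hdvd c)
  have hsize : ((k * #(subsetsWithSum n k c) : ℕ) : ℤ) ≤ n.choose k :=
    Nat.cast_le.2 (mul_card_subsetsWithSum_le_choose h2k)
  push_cast at hprime hsize
  rw [l1normP_gaussBinom_mul_one_sub_X]
  constructor <;> linarith

/-- If `n ≥ 2k ≥ 2` and `p` is the largest prime factor of `C(n,k)`, then the ℓ¹-norm
of `[n choose k]_q · (1 − q)` is at most `(2/p)·C(n,k) ≤ (2/k)·C(n,k)`. -/
theorem l1norm_gaussBinom_le (n k p : ℕ) (hk : 1 ≤ k) (h2k : 2 * k ≤ n)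
    (hp : p.Prime) (hdvd : p ∣ n.choose k)
    (hmax : ∀ q : ℕ, q.Prime → q ∣ n.choose k → q ≤ p) :
    (p : ℤ) * l1normP (gaussBinom n k * (1 - Polynomial.X)) ≤ 2 * (n.choose k : ℤ) ∧
    (k : ℤ) * l1normP (gaussBinom n k * (1 - Polynomial.X)) ≤ 2 * (n.choose k : ℤ) :=
  l1norm_gaussBinom_le_general n k p hk h2k hp hdvd
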